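/- Let G' be a finite simple graph with a distinguished vertex v' and a set S of Steiner vertices not containing v', and let T' be a spanning tree of G' satisfying the degree-one condition. Let C be a cycle in G' of length |C| ≥ 4 passing through v' whose two edges incident to v' are {v', s_i} and {v', s_j} for distinct Steiner vertices s_i, s_j ∈ S, such that {s_i, s_j} is an edge of G' not belonging to C. If the number of edges of C belonging to T' equals |C| − 2, then the edge {s_i, s_j} does not belong to T'. -/

import Mathlib

/-!
If `{sᵢ, sⱼ}` were an edge of `T'`, the degree-one condition would keep both `{v', sᵢ}` and
`{v', sⱼ}` out of `T'`. These are two edges of `C` outside `T'`, so when exactly `|C| - 2` edges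
of `C` lie in `T'` they are the only ones, and the path `C - v'` from `sᵢ` to `sⱼ` runs inside
`T'`. Since it avoids the edge `{sᵢ, sⱼ}`, adding that edge would close a cycle in the tree `T'`.
-/

theorem List.eq_or_eq_of_length_filter_eq_length_sub_two {α : Type*} {l : List α}
    {p : α → Prop} [DecidablePred p]
    (hlen : (l.filter (fun x => p x)).length = l.length - 2)
    {a b : α} (hab : a ≠ b) (ha : a ∈ l) (hb : b ∈ l) (hpa : ¬ p a) (hpb : ¬ p b)
    {x : α} (hx : x ∈ l) (hpx : ¬ p x) : x = a ∨ x = b := by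
  by_contra! hxab
  set m := l.filter (fun x => !decide (p x))
  have hsplit : l.length = (l.filter (fun x => p x)).length + m.length :=
    List.length_eq_length_filter_add _
  have hsub : [a, b, x] ⊆ m := by
    simp [List.subset_def, m, ha, hb, hx, hpa, hpb, hpx]
  have hnodup : [a, b, x].Nodup := by
    simp [hab, hxab.1.symm, hxab.2.symm]
  have hthree : 3 ≤ m.length := (hnodup.subperm hsub).length_le
  omega

namespace SimpleGraph

variable {V : Type*} {G : SimpleGraph V} {u v : V}

theorem eq_of_adj_of_degree_eq_one [Fintype (G.neighborSet v)] (h : G.degree v = 1) {a b : V}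
    (ha : G.Adj v a) (hb : G.Adj v b) : a = b :=
  (degree_eq_one_iff_existsUnique_adj.mp h).unique ha hb

theorem IsAcyclic.mk_mem_edges_of_isPath (hG : G.IsAcyclic) {q : G.Walk u v} (hq : q.IsPath)
    (h : G.Adj u v) : s(u, v) ∈ q.edges := by
  by_contra hn
  exact hG _ ((Walk.cons_isCycle_iff q h.symm).mpr ⟨hq, by rwa [Sym2.eq_swap]⟩)

namespace Walk

theorem IsCycle.exists_edges_eq_cons_append {c : G.Walk u u} (hc : c.IsCycle) :
    ∃ (x y : V) (q : G.Walk x y), q.IsPath ∧ u ∉ q.support ∧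
      c.edges = s(u, x) :: (q.edges ++ [s(y, u)]) := by
  cases c with
  | nil => exact absurd hc not_isCycle_nil
  | cons h p =>
    have hp := ((cons_isCycle_iff p h).mp hc).1
    have hconcat := concat_dropLast (adj_penultimate (not_nil_of_isCycle_cons hc))
    refine ⟨_, _, p.dropLast, hp.dropLast, fun hu => ?_, ?_⟩
    · have hnodup := hp.support_nodup
      rw [← hconcat, support_concat] at hnodup
      exact (List.nodup_append.mp hnodup).2.2 u hu u (List.mem_singleton_self u) rfl
    · conv_lhs => rw [← hconcat]
      rw [edges_cons, edges_concat, List.concat_eq_append]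

theorem IsCycle.exists_isPath_between_neighbors {c : G.Walk u u} (hc : c.IsCycle) {a b : V}
    (honly : ∀ e ∈ c.edges, u ∈ e → e = s(u, a) ∨ e = s(u, b)) :
    ∃ q : G.Walk a b, q.IsPath ∧ u ∉ q.support ∧ ∀ e ∈ q.edges, e ∈ c.edges := by
  obtain ⟨x, y, q, hq, hu, hedges⟩ := hc.exists_edges_eq_cons_append
  have hx : x = a ∨ x = b := (honly s(u, x) (by simp [hedges]) (Sym2.mem_mk_left u x)).imp
    Sym2.congr_right.mp Sym2.congr_right.mp
  have hy : y = a ∨ y = b := (honly s(u, y) (by simp [hedges, Sym2.eq_swap])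
    (Sym2.mem_mk_left u y)).imp Sym2.congr_right.mp Sym2.congr_right.mp
  have hxy : x ≠ y := by
    rintro rfl
    have hnodup := hedges ▸ hc.edges_nodup
    simp [Sym2.eq_swap] at hnodup
  have hsub : ∀ e ∈ q.edges, e ∈ c.edges := by simp +contextual [hedges]
  rcases hx with rfl | rfl <;> rcases hy with rfl | rfl
  · exact absurd rfl hxy
  · exact ⟨q, hq, hu, hsub⟩
  · exact ⟨q.reverse, hq.reverse, by simpa using hu, by simpa using hsub⟩
  · exact absurd rfl hxy

end Walk

end SimpleGraph

open SimpleGraph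

theorem tight_case_forces_edge_out_general {V : Type*} [Fintype V]
    (G T : SimpleGraph V) [DecidableRel T.Adj]
    (v' : V) (S : Set V) (hv'S : v' ∉ S)
    (hT : T.IsTree)
    (hdeg : ∀ s ∈ S, T.Adj v' s → T.degree s = 1)
    (s_i s_j : V) (hsi : s_i ∈ S) (hsj : s_j ∈ S)
    (c : G.Walk v' v') (hc : c.IsCycle)
    (hei : s(v', s_i) ∈ c.edges) (hej : s(v', s_j) ∈ c.edges)
    (honly : ∀ e ∈ c.edges, v' ∈ e → e = s(v', s_i) ∨ e = s(v', s_j))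
    (hnotC : s(s_i, s_j) ∉ c.edges)
    (heq : (c.edges.filter (fun e => e ∈ T.edgeSet)).length = c.length - 2) :
    ¬ T.Adj s_i s_j := by
  intro hTij
  have hiT : ¬ T.Adj v' s_i := fun h =>
    hv'S (eq_of_adj_of_degree_eq_one (hdeg s_i hsi h) h.symm hTij ▸ hsj)
  have hjT : ¬ T.Adj v' s_j := fun h =>
    hv'S (eq_of_adj_of_degree_eq_one (hdeg s_j hsj h) h.symm hTij.symm ▸ hsi)
  have hij : s(v', s_i) ≠ s(v', s_j) := fun h => hTij.ne (Sym2.congr_right.mp h)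
  obtain ⟨q, hq, hv'q, hqc⟩ := hc.exists_isPath_between_neighbors honly
  have hqT : ∀ e ∈ q.edges, e ∈ T.edgeSet := by
    intro e he
    by_contra heT
    refine hv'q (Walk.mem_support_of_mem_edges he ?_)
    rcases List.eq_or_eq_of_length_filter_eq_length_sub_two (c.length_edges ▸ heq)
      hij hei hej hiT hjT (hqc e he) heT with rfl | rfl <;> simp
  exact hnotC (hqc _ (by simpa using hT.isAcyclic.mk_mem_edges_of_isPath (hq.transfer hqT) hTij))

/-- **final case analysis in the proof of Proposition 1.**
With `G`, `v'`, `S`, `T` and the cycle `c` as in Proposition 1 (length `≥ 4`,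
through `v'`, its two edges incident to `v'` being `{v', sᵢ}` and `{v', sⱼ}`
for distinct Steiner vertices `sᵢ, sⱼ ∈ S`, and `{sᵢ, sⱼ}` an edge of `G` not
belonging to `c`): if the number of edges of `c` belonging to `T` equals
`|c| - 2`, then the edge `{sᵢ, sⱼ}` does not belong to `T`. -/
theorem tight_case_forces_edge_out {V : Type*} [Fintype V]
    (G T : SimpleGraph V) [DecidableRel T.Adj]
    (v' : V) (S : Set V) (hv'S : v' ∉ S)
    (hTG : T ≤ G) (hT : T.IsTree)
    (hdeg : ∀ s ∈ S, T.Adj v' s → T.degree s = 1)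
    (s_i s_j : V) (hsi : s_i ∈ S) (hsj : s_j ∈ S) (hij : s_i ≠ s_j)
    (c : G.Walk v' v') (hc : c.IsCycle) (hlen : 4 ≤ c.length)
    (hei : s(v', s_i) ∈ c.edges) (hej : s(v', s_j) ∈ c.edges)
    (honly : ∀ e ∈ c.edges, v' ∈ e → e = s(v', s_i) ∨ e = s(v', s_j))
    (hGij : G.Adj s_i s_j) (hnotC : s(s_i, s_j) ∉ c.edges)
    (heq : (c.edges.filter (fun e => e ∈ T.edgeSet)).length = c.length - 2) :
    ¬ T.Adj s_i s_j :=
  tight_case_forces_edge_out_general G T v' S hv'S hT hdeg s_i s_j hsi hsj c hc hei hej honly hnotC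
    heq
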